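/- arXiv:1904.05142 — 2 statements merged into one kernel-verified Lean document; each statement's English description precedes it below -/
import Mathlib

section
/- If f is a spatially homogeneous steady state of the BGK equation with reservoirs, i.e. f = f(v) is a probability density satisfying 0 = α M_f + (1−α) ρ_f (M_{T₁}+M_{T₂})/2 − f with α ∈ [0,1), then f = α M_{T∞} + (1−α)(M_{T₁}+M_{T₂})/2 where T∞ = (T₁+T₂)/2. -/
/-!
The Maxwellian `M_T` is the Gaussian density of variance `T`, so its second moment is `T`.
Multiplying the steady state equation by `v²` and integrating therefore gives the scalar
equation `T_f = α T_f + (1 - α) T∞` for the temperature of `f`. As `α < 1`, this forces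
`T_f = T∞`, and substituting back into the equation determines `f`.
-/

open MeasureTheory Real

/-- Centered Maxwellian at temperature `T`. -/
noncomputable def Maxwellian (T v : ℝ) : ℝ :=
  (Real.sqrt (2 * Real.pi * T))⁻¹ * Real.exp (-v ^ 2 / (2 * T))

open ProbabilityTheory NNReal

lemma integrable_sq_mul_gaussianPDFReal (μ : ℝ) (v : ℝ≥0) :
    Integrable (fun x ↦ x ^ 2 * gaussianPDFReal μ v x) := by
  rcases eq_or_ne v 0 with rfl | hv
  · simp
  have h := (memLp_id_gaussianReal (μ := μ) (v := v) 2).integrable_sq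
  rw [gaussianReal_of_var_ne_zero _ hv, integrable_withDensity_iff_integrable_smul'
    (measurable_gaussianPDF μ v) (ae_of_all _ fun _ ↦ gaussianPDF_lt_top)] at h
  simpa [toReal_gaussianPDF, mul_comm] using h

lemma integral_sq_mul_gaussianPDFReal (v : ℝ≥0) :
    ∫ x, x ^ 2 * gaussianPDFReal 0 v x = v := by
  rcases eq_or_ne v 0 with rfl | hv
  · simp
  have h := variance_of_integral_eq_zero (X := id) aemeasurable_id
    (integral_id_gaussianReal (μ := 0) (v := v))
  rw [variance_id_gaussianReal, integral_gaussianReal_eq_integral_smul hv] at h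
  simpa [mul_comm] using h.symm

/-- For `T ≤ 0` both sides vanish, because `√` of a nonpositive real is `0`. -/
lemma maxwellian_eq_gaussianPDFReal (T v : ℝ) :
    Maxwellian T v = gaussianPDFReal 0 T.toNNReal v := by
  rcases le_total T 0 with hT | hT
  · have hsqrt : √(2 * π * T) = 0 := Real.sqrt_eq_zero'.2 (by nlinarith [Real.pi_pos])
    simp [Maxwellian, Real.toNNReal_of_nonpos hT, hsqrt]
  · simp [Maxwellian, gaussianPDFReal, Real.coe_toNNReal _ hT]

lemma integrable_sq_mul_maxwellian (T : ℝ) : Integrable (fun v ↦ v ^ 2 * Maxwellian T v) := by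
  simpa only [maxwellian_eq_gaussianPDFReal] using integrable_sq_mul_gaussianPDFReal 0 T.toNNReal

lemma integral_sq_mul_maxwellian (T : ℝ) : ∫ v, v ^ 2 * Maxwellian T v = max T 0 := by
  simp only [maxwellian_eq_gaussianPDFReal, integral_sq_mul_gaussianPDFReal, Real.coe_toNNReal']

lemma eq_of_eq_mul_max_zero_add {α c S : ℝ} (hα : α < 1) (hc : 0 < c)
    (h : S = α * max S 0 + (1 - α) * c) : S = c := by
  rcases le_total S 0 with hS | hS
  · rw [max_eq_right hS] at h
    nlinarith
  · rw [max_eq_left hS] at h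
    have : (1 - α) * S = (1 - α) * c := by linarith
    exact mul_left_cancel₀ (by linarith) this

lemma integral_sq_mul_maxwellian_mixture {α S T₁ T₂ : ℝ} (hT₁ : 0 < T₁) (hT₂ : 0 < T₂) :
    ∫ v, v ^ 2 * (α * Maxwellian S v + (1 - α) * ((Maxwellian T₁ v + Maxwellian T₂ v) / 2))
      = α * max S 0 + (1 - α) * ((T₁ + T₂) / 2) := by
  have h₀ := (integrable_sq_mul_maxwellian S).const_mul α
  have h₁ := (integrable_sq_mul_maxwellian T₁).const_mul ((1 - α) / 2)
  have h₂ := (integrable_sq_mul_maxwellian T₂).const_mul ((1 - α) / 2)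
  calc _ = ∫ v, (α * (v ^ 2 * Maxwellian S v) + ((1 - α) / 2 * (v ^ 2 * Maxwellian T₁ v)
          + (1 - α) / 2 * (v ^ 2 * Maxwellian T₂ v))) := by
        congr 1; ext v; ring
    _ = α * max S 0 + (1 - α) / 2 * max T₁ 0 + (1 - α) / 2 * max T₂ 0 := by
        rw [integral_add h₀ (h₁.fun_add h₂), integral_add h₁ h₂]
        simp only [integral_const_mul, integral_sq_mul_maxwellian, add_assoc]
    _ = _ := by
        rw [max_eq_left hT₁.le, max_eq_left hT₂.le]
        ring

theorem homogeneous_steady_state_unique_general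
    (T₁ T₂ α : ℝ) (hT₁ : 0 < T₁) (hT₂ : 0 < T₂)
    (hα : α ∈ Set.Ico (0:ℝ) 1)
    (f : ℝ → ℝ)
    -- the steady state equation `0 = α M_f + (1-α) ρ_f (M_{T₁}+M_{T₂})/2 - f`,
    -- where `ρ_f = 1` and `T_f = ∫ v² f`
    (h_eq : ∀ v, 0 = α * Maxwellian (∫ w, w ^ 2 * f w) v
        + (1 - α) * ((Maxwellian T₁ v + Maxwellian T₂ v) / 2) - f v) :
    ∀ v, f v = α * Maxwellian ((T₁ + T₂) / 2) v
        + (1 - α) * ((Maxwellian T₁ v + Maxwellian T₂ v) / 2) := by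
  set S := ∫ w, w ^ 2 * f w with hS
  have hf : ∀ v,
      f v = α * Maxwellian S v + (1 - α) * ((Maxwellian T₁ v + Maxwellian T₂ v) / 2) :=
    fun v ↦ by linarith [h_eq v]
  have hS_fixed : S = α * max S 0 + (1 - α) * ((T₁ + T₂) / 2) := by
    rw [← integral_sq_mul_maxwellian_mixture hT₁ hT₂]
    conv_lhs => rw [hS]
    simp only [hf]
  have hS_eq : S = (T₁ + T₂) / 2 := eq_of_eq_mul_max_zero_add hα.2 (by positivity) hS_fixed
  intro v
  rw [hf, hS_eq]

theorem homogeneous_steady_state_unique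
    (T₁ T₂ α : ℝ) (hT₁ : 0 < T₁) (hT₂ : 0 < T₂)
    (hα : α ∈ Set.Ico (0:ℝ) 1)
    (f : ℝ → ℝ)
    (hf_nonneg : ∀ v, 0 ≤ f v)
    (hf_prob : ∫ v, f v = 1)
    (hf_mom : Integrable (fun v => v ^ 2 * f v))
    -- the steady state equation `0 = α M_f + (1-α) ρ_f (M_{T₁}+M_{T₂})/2 - f`,
    -- where `ρ_f = 1` and `T_f = ∫ v² f`
    (h_eq : ∀ v, 0 = α * Maxwellian (∫ w, w ^ 2 * f w) v
        + (1 - α) * ((Maxwellian T₁ v + Maxwellian T₂ v) / 2) - f v) :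
    ∀ v, f v = α * Maxwellian ((T₁ + T₂) / 2) v
        + (1 - α) * ((Maxwellian T₁ v + Maxwellian T₂ v) / 2) :=
  homogeneous_steady_state_unique_general T₁ T₂ α hT₁ hT₂ hα f h_eq
end

section
/- Abstract hypocoercivity auxiliary bounds: let H be a Hilbert space, Π₀ an orthogonal projection, S a closed skew-adjoint operator with Π₀SΠ₀ = 0, and A = (1 + (SΠ₀)*(SΠ₀))^{−1}(SΠ₀)*. Then for all h in the domain, ‖Ah‖ ≤ (1/2)‖(1−Π₀)h‖ and ‖SAh‖ ≤ ‖(1−Π₀)h‖. -/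
/-!
Write `T = S P0` and `g = A h`. Pairing the defining relation `g + T*T g = T* h` with `g` gives
`‖g‖² + ‖T g‖² = ⟪T g, h⟫`. Since `g ∈ ran P0` we have `T g = S g`, and `P0 S P0 = 0` makes `S g`
orthogonal to `ran P0`, so `h` may be replaced by `(1 - P0) h`. Cauchy–Schwarz then gives
`‖g‖² + ‖S g‖² ≤ ‖S g‖ ‖(1 - P0) h‖`, from which both bounds follow by `ab ≤ a²/4 + b²`.
-/

open ContinuousLinearMap

lemma le_half_and_le_of_sq_add_sq_le_mul {a b c : ℝ} (hc : 0 ≤ c)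
    (h : a ^ 2 + b ^ 2 ≤ b * c) : a ≤ c / 2 ∧ b ≤ c := by
  constructor
  · nlinarith [sq_nonneg (b - c / 2)]
  · nlinarith [sq_nonneg a]

section Adjoint

variable {H K : Type*} [NormedAddCommGroup H] [InnerProductSpace ℝ H] [CompleteSpace H]
  [NormedAddCommGroup K] [InnerProductSpace ℝ K] [CompleteSpace K]

lemma norm_sq_add_norm_sq_eq_inner_of_comp_eq_adjoint {T : H →L[ℝ] K} {A : K →L[ℝ] H}
    (hA : (ContinuousLinearMap.id ℝ H + (adjoint T).comp T).comp A = adjoint T) (k : K) :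
    ‖A k‖ ^ 2 + ‖T (A k)‖ ^ 2 = inner ℝ (T (A k)) k := by
  have hk : A k + adjoint T (T (A k)) = adjoint T k := by
    simpa using congr($hA k)
  have := congrArg (inner ℝ (A k)) hk
  rwa [inner_add_right, adjoint_inner_right, adjoint_inner_right,
    real_inner_self_eq_norm_sq, real_inner_self_eq_norm_sq] at this

lemma inner_sub_apply_eq_inner_of_apply_eq_zero {P : H →L[ℝ] H} (hP : adjoint P = P) {x : H}
    (hx : P x = 0) (h : H) : inner ℝ x (h - P h) = inner ℝ x h := by
  rw [inner_sub_right, ← adjoint_inner_left, hP, hx, inner_zero_left, sub_zero]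

end Adjoint

theorem hypocoercivity_auxiliary_operator_bounds_general
    {H : Type*} [NormedAddCommGroup H] [InnerProductSpace ℝ H] [CompleteSpace H]
    (S P0 A : H →L[ℝ] H)
    -- `P0` is an orthogonal projection
    (hP_sa : ContinuousLinearMap.adjoint P0 = P0)
    -- consistency: `P0 S P0 = 0`
    (hcons : P0.comp (S.comp P0) = 0)
    -- `A = (1 + (SP0)*(SP0))⁻¹ (SP0)*`, expressed by its defining relations
    (hA_range : P0.comp A = A)
    (hA_def : ((ContinuousLinearMap.id ℝ H) +
        (ContinuousLinearMap.adjoint (S.comp P0)).comp (S.comp P0)).comp A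
      = ContinuousLinearMap.adjoint (S.comp P0)) :
    ∀ h : H, ‖A h‖ ≤ (1 / 2) * ‖h - P0 h‖ ∧ ‖S (A h)‖ ≤ ‖h - P0 h‖ := by
  intro h
  have hPA : P0 (A h) = A h := congr($hA_range h)
  have hPSA : P0 (S (A h)) = 0 := by simpa [hPA] using congr($hcons (A h))
  have hkey : ‖A h‖ ^ 2 + ‖S (A h)‖ ^ 2 ≤ ‖S (A h)‖ * ‖h - P0 h‖ := by
    calc ‖A h‖ ^ 2 + ‖S (A h)‖ ^ 2 = inner ℝ (S (A h)) h := by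
          simpa [hPA] using norm_sq_add_norm_sq_eq_inner_of_comp_eq_adjoint hA_def h
      _ = inner ℝ (S (A h)) (h - P0 h) :=
          (inner_sub_apply_eq_inner_of_apply_eq_zero hP_sa hPSA h).symm
      _ ≤ ‖S (A h)‖ * ‖h - P0 h‖ := real_inner_le_norm _ _
  obtain ⟨hA, hSA⟩ := le_half_and_le_of_sq_add_sq_le_mul (norm_nonneg _) hkey
  exact ⟨by linarith, hSA⟩

theorem hypocoercivity_auxiliary_operator_bounds
    {H : Type*} [NormedAddCommGroup H] [InnerProductSpace ℝ H] [CompleteSpace H]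
    (S P0 A : H →L[ℝ] H)
    -- `P0` is an orthogonal projection
    (hP_idem : P0.comp P0 = P0)
    (hP_sa : ContinuousLinearMap.adjoint P0 = P0)
    -- `S` is skew-adjoint
    (hS_skew : ContinuousLinearMap.adjoint S = -S)
    -- consistency: `P0 S P0 = 0`
    (hcons : P0.comp (S.comp P0) = 0)
    -- `A = (1 + (SP0)*(SP0))⁻¹ (SP0)*`, expressed by its defining relations
    (hA_range : P0.comp A = A)
    (hA_def : ((ContinuousLinearMap.id ℝ H) +
        (ContinuousLinearMap.adjoint (S.comp P0)).comp (S.comp P0)).comp A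
      = ContinuousLinearMap.adjoint (S.comp P0)) :
    ∀ h : H, ‖A h‖ ≤ (1 / 2) * ‖h - P0 h‖ ∧ ‖S (A h)‖ ≤ ‖h - P0 h‖ :=
  hypocoercivity_auxiliary_operator_bounds_general S P0 A hP_sa hcons hA_range hA_def
end
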